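/- Let E be a Hausdorff locally convex space over ℝ in which every bounded subset is totally bounded. Then every absolutely convex (convex and balanced) subset of E which is compact for the weak topology σ(E,E') is compact for the original topology of E. Consequently, the topology of uniform convergence on absolutely convex compact subsets of E and the topology of uniform convergence on absolutely convex weakly compact subsets of E coincide on the dual E' (the Arens dual and the Mackey dual of E agree). -/

import Mathlib

/-!
A weakly compact absolutely convex set `K` is complete: a Cauchy filter on `K` has a weak cluster
point, and since closed convex sets are weakly closed, the Cauchy condition measured in closed
absolutely convex neighbourhoods of `0` forces convergence to that point. It is also bounded:
for a closed absolutely convex neighbourhood `W` of `0`, the sets `K ∩ n • W` are weakly closed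
and cover the weakly compact Hausdorff space `K`, so by Baire one of them contains a relatively
open piece of `K`, and convexity of `K` spreads this to `K ⊆ r • W`. Being bounded, `K` is totally
bounded by assumption, hence compact. The second claim follows because the two families of sets
defining the Arens and Mackey topologies then coincide.
-/

open Filter Topology Set Bornology Pointwise

/-- A sequence in a locally convex space is *Mackey-Cauchy* if there are a bounded
absolutely convex set `B` and a double sequence of nonnegative reals `c` tending to `0`
such that `x n - x m ∈ c n m • B` for all `n, m`. -/
def MackeyCauchy (E : Type*) [AddCommGroup E] [Module ℝ E] [TopologicalSpace E]
    (x : ℕ → E) : Prop :=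
  ∃ (B : Set E) (c : ℕ → ℕ → ℝ),
    IsVonNBounded ℝ B ∧ Convex ℝ B ∧ Balanced ℝ B ∧
    (∀ n m, 0 ≤ c n m) ∧
    Tendsto (fun p : ℕ × ℕ => c p.1 p.2) atTop (𝓝 (0 : ℝ)) ∧
    ∀ n m, x n - x m ∈ c n m • B

/-- A locally convex space is *Mackey-complete* if every Mackey-Cauchy sequence converges. -/
def MackeyComplete (E : Type*) [AddCommGroup E] [Module ℝ E] [TopologicalSpace E] : Prop :=
  ∀ x : ℕ → E, MackeyCauchy E x → ∃ l : E, Tendsto x atTop (𝓝 l)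

/-- A locally convex space is *k-quasi-complete* if the closed absolutely convex hull of
every compact set is compact. -/
def KQuasiComplete (E : Type*) [AddCommGroup E] [Module ℝ E] [TopologicalSpace E] : Prop :=
  ∀ K : Set E, IsCompact K → IsCompact (closure (convexHull ℝ (balancedHull ℝ K)))

variable (E : Type*) [AddCommGroup E] [Module ℝ E] [TopologicalSpace E]

/-- The Arens dual `E'_c`: the topological dual with the topology of uniform convergence on
absolutely convex compact subsets of `E`. -/
abbrev ArensDual : Type _ :=
  UniformConvergenceCLM (RingHom.id ℝ) ℝ {K : Set E | Convex ℝ K ∧ Balanced ℝ K ∧ IsCompact K}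

/-- The Mackey dual `E'_μ`: the topological dual with the topology of uniform convergence on
absolutely convex weakly compact subsets of `E`. -/
abbrev MackeyDual : Type _ :=
  UniformConvergenceCLM (RingHom.id ℝ) ℝ
    {K : Set E | Convex ℝ K ∧ Balanced ℝ K ∧ IsCompact (⇑(toWeakSpace ℝ E) '' K)}

/-- The Schwartz ε-product `E ε F`: continuous linear maps from the Arens dual `E'_c` to `F`,
with the topology of uniform convergence on equicontinuous subsets of `E'`. -/
abbrev EpsProduct (F : Type*) [AddCommGroup F] [Module ℝ F] [TopologicalSpace F]
    [IsTopologicalAddGroup F] : Type _ :=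
  UniformConvergenceCLM (RingHom.id ℝ) F
    {H : Set (ArensDual E) | Equicontinuous fun f : H => (f.1 : E → ℝ)}

/-- The η-product `E η F`: continuous linear maps from the Mackey dual `E'_μ` to `F`,
with the topology of uniform convergence on equicontinuous subsets of `E'`. -/
abbrev EtaProduct (F : Type*) [AddCommGroup F] [Module ℝ F] [TopologicalSpace F]
    [IsTopologicalAddGroup F] : Type _ :=
  UniformConvergenceCLM (RingHom.id ℝ) F
    {H : Set (MackeyDual E) | Equicontinuous fun f : H => (f.1 : E → ℝ)}

section Transport

variable {𝕜 M N : Type*} [NormedField 𝕜] [AddCommGroup M] [Module 𝕜 M] [AddCommGroup N]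
  [Module 𝕜 N]

theorem Balanced.absorbs_of_subset_smul {K C : Set M} (hC : Balanced 𝕜 C) {r : 𝕜}
    (hK : K ⊆ r • C) : Absorbs 𝕜 C K :=
  absorbs_iff_norm.mpr ⟨‖r‖, fun _ hc => hK.trans (hC.smul_mono hc)⟩

theorem Balanced.image {s : Set M} (hs : Balanced 𝕜 s) (f : M →ₗ[𝕜] N) : Balanced 𝕜 (f '' s) :=
  fun a ha => by
    rw [← image_smul_set]
    exact image_mono (hs a ha)

theorem LinearEquiv.absorbs_image_iff (e : M ≃ₗ[𝕜] N) {s t : Set M} :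
    Absorbs 𝕜 (e '' s) (e '' t) ↔ Absorbs 𝕜 s t := by
  simp only [Absorbs, ← image_smul_set, image_subset_image_iff e.injective]

theorem Absorbent.image {s : Set M} (hs : Absorbent 𝕜 s) (e : M ≃ₗ[𝕜] N) :
    Absorbent 𝕜 (e '' s) := fun y => by
  rw [← e.apply_symm_apply y, ← image_singleton, e.absorbs_image_iff]
  exact hs _

end Transport

section Barrel

variable {X : Type*} [AddCommGroup X] [Module ℝ X] [TopologicalSpace X] [IsTopologicalAddGroup X]
  [ContinuousSMul ℝ X] {K C : Set X}

theorem IsCompact.exists_open_inter_subset_smul [T2Space X] (hK : IsCompact K)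
    (hKne : K.Nonempty) (hC : IsClosed C) (hCa : Absorbent ℝ C) :
    ∃ x₀ ∈ K, ∃ U : Set X, IsOpen U ∧ x₀ ∈ U ∧ ∃ c : ℝ, 0 ≤ c ∧ U ∩ K ⊆ c • C := by
  have : CompactSpace K := isCompact_iff_compactSpace.mp hK
  have : Nonempty K := hKne.to_subtype
  let F : ℕ → Set K := fun n => Subtype.val ⁻¹' (((n : ℝ) + 1) • C)
  have hF : ∀ n, IsClosed (F n) := fun n =>
    (hC.smul_of_ne_zero (by positivity)).preimage continuous_subtype_val
  have hcover : ⋃ n, F n = univ := by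
    refine eq_univ_of_forall fun z => mem_iUnion.mpr ?_
    obtain ⟨r, -, hr⟩ := (hCa z.1).exists_pos
    refine ⟨⌈r⌉₊, hr _ ?_ rfl⟩
    rw [Real.norm_of_nonneg (by positivity)]
    linarith [Nat.le_ceil r]
  obtain ⟨n, z, hz⟩ := nonempty_interior_of_iUnion_of_closed hF hcover
  obtain ⟨U, hU, hUz⟩ := isOpen_induced_iff.mp (isOpen_interior (s := F n))
  refine ⟨z, z.2, U, hU, ?_, (n : ℝ) + 1, by positivity, fun y hy => ?_⟩
  · rw [← mem_preimage, hUz]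
    exact hz
  · have : (⟨y, hy.2⟩ : K) ∈ interior (F n) := by
      rw [← hUz]
      exact hy.1
    exact interior_subset (s := F n) this

/-- Compactness of `K` gives one `δ > 0` with `x₀ + δ • (z - x₀) ∈ U ∩ K` for all `z ∈ K`, and
`δ • z` is the difference of this point and `(1 - δ) • x₀`, both in `c • C`. -/
theorem IsCompact.exists_subset_smul_of_open_inter_subset_smul (hK : IsCompact K)
    (hKc : Convex ℝ K) (hCc : Convex ℝ C) (hCb : Balanced ℝ C) {x₀ : X} (hx₀ : x₀ ∈ K)
    {U : Set X} (hU : IsOpen U) (hx₀U : x₀ ∈ U) {c : ℝ} (hc : 0 ≤ c) (hUK : U ∩ K ⊆ c • C) :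
    ∃ r : ℝ, K ⊆ r • C := by
  have hnear : ∀ᶠ t in 𝓝 (0 : ℝ), ∀ z ∈ K, x₀ + t • (z - x₀) ∈ U := by
    refine hK.eventually_forall_of_forall_eventually fun z _ => ?_
    have hcont : Continuous fun p : ℝ × X => x₀ + p.1 • (p.2 - x₀) := by fun_prop
    exact hcont.continuousAt.eventually (hU.mem_nhds (by simpa using hx₀U))
  obtain ⟨δ, hδU, hδ0, hδ1⟩ :=
    ((hnear.filter_mono nhdsWithin_le_nhds).and (Ioc_mem_nhdsGT one_pos)).exists
  refine ⟨δ⁻¹ * (c + c), fun z hz => ?_⟩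
  have hy : x₀ + δ • (z - x₀) ∈ c • C :=
    hUK ⟨hδU z hz, hKc.add_smul_sub_mem hx₀ hz ⟨hδ0.le, hδ1⟩⟩
  have hx₀' : (δ - 1) • x₀ ∈ c • C := by
    refine (hCb.smul c) (δ - 1) ?_ (smul_mem_smul_set (hUK ⟨hx₀U, hx₀⟩))
    rw [Real.norm_eq_abs, abs_le]
    constructor <;> linarith
  have hδz : δ • z ∈ (c + c) • C := by
    rw [hCc.add_smul hc hc]
    convert add_mem_add hy hx₀' using 1
    module
  rw [mul_smul]
  convert smul_mem_smul_set (a := δ⁻¹) hδz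
  rw [smul_smul, inv_mul_cancel₀ hδ0.ne', one_smul]

theorem IsCompact.absorbs_of_convex [T2Space X] (hK : IsCompact K) (hKc : Convex ℝ K)
    (hC : IsClosed C) (hCc : Convex ℝ C) (hCb : Balanced ℝ C) (hCa : Absorbent ℝ C) :
    Absorbs ℝ C K := by
  rcases K.eq_empty_or_nonempty with rfl | hKne
  · exact Absorbs.empty
  obtain ⟨x₀, hx₀, U, hU, hx₀U, c, hc, hUK⟩ := hK.exists_open_inter_subset_smul hKne hC hCa
  obtain ⟨r, hr⟩ := hK.exists_subset_smul_of_open_inter_subset_smul hKc hCc hCb hx₀ hU hx₀U hc hUK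
  exact hCb.absorbs_of_subset_smul hr

end Barrel

section WeakTopology

open scoped Uniformity

variable {F : Type*} [AddCommGroup F] [Module ℝ F]

theorem IsClosed.toWeakSpace_image_of_convex [TopologicalSpace F] [IsTopologicalAddGroup F]
    [ContinuousSMul ℝ F] [LocallyConvexSpace ℝ F] {s : Set F} (hc : IsClosed s)
    (hs : Convex ℝ s) : IsClosed (toWeakSpace ℝ F '' s) := by
  rw [← hc.closure_eq, hs.toWeakSpace_closure ℝ]
  exact isClosed_closure

theorem isVonNBounded_of_isCompact_toWeakSpace_image [TopologicalSpace F]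
    [IsTopologicalAddGroup F] [ContinuousSMul ℝ F] [LocallyConvexSpace ℝ F] [T2Space F]
    {K : Set F} (hKc : Convex ℝ K) (hK : IsCompact (toWeakSpace ℝ F '' K)) :
    IsVonNBounded ℝ K := by
  intro V hV
  obtain ⟨W, ⟨hW0, hWcl, hWb, hWc⟩, hWV⟩ := (nhds_hasBasis_absConvex_closed ℝ F).mem_iff.mp hV
  have hWK := hK.absorbs_of_convex (hKc.linear_image _) (hWcl.toWeakSpace_image_of_convex hWc)
    (hWc.linear_image _) (hWb.image _) ((absorbent_nhds_zero hW0).image _)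
  exact ((toWeakSpace ℝ F).absorbs_image_iff.mp hWK).mono_left hWV

variable [UniformSpace F] [IsUniformAddGroup F] [ContinuousSMul ℝ F] [LocallyConvexSpace ℝ F]

theorem Cauchy.le_nhds_of_clusterPt_toWeakSpace {l : Filter F} (hl : Cauchy l) {x : F}
    (hx : ClusterPt (toWeakSpace ℝ F x) (map (toWeakSpace ℝ F) l)) : l ≤ 𝓝 x := by
  intro V hV
  have hV0 : (x + ·) ⁻¹' V ∈ 𝓝 (0 : F) :=
    (continuous_const_add x).continuousAt.preimage_mem_nhds (by simpa using hV)
  obtain ⟨U, hU0, hUV⟩ := exists_nhds_zero_half hV0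
  obtain ⟨W, ⟨hW0, hWcl, hWb, hWc⟩, hWU⟩ := (nhds_hasBasis_absConvex_closed ℝ F).mem_iff.mp hU0
  have hWunif : {p : F × F | p.2 - p.1 ∈ W} ∈ 𝓤 F := by
    rw [uniformity_eq_comap_nhds_zero F]
    exact preimage_mem_comap hW0
  obtain ⟨A, hAl, hAA⟩ := mem_prod_self_iff.mp (hl.2 hWunif)
  obtain ⟨a₀, ha₀⟩ := hl.1.nonempty_of_mem hAl
  have hAa₀ : ∀ a ∈ A, a - a₀ ∈ W := fun a ha => hAA (mk_mem_prod ha₀ ha)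
  have hAW : A ⊆ a₀ +ᵥ W := fun a ha => ⟨a - a₀, hAa₀ a ha, by simp [vadd_eq_add]⟩
  have hxW : x ∈ a₀ +ᵥ W := by
    have hx' : toWeakSpace ℝ F x ∈ closure (toWeakSpace ℝ F '' A) :=
      mem_closure_iff_clusterPt.mpr (hx.mono (le_principal_iff.mpr (image_mem_map hAl)))
    have hclosed := (hWcl.vadd a₀).toWeakSpace_image_of_convex (hWc.vadd a₀)
    exact (toWeakSpace ℝ F).injective.mem_set_image.mp
      (closure_minimal (image_mono hAW) hclosed hx')
  obtain ⟨w, hw, rfl⟩ := hxW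
  refine mem_of_superset hAl fun a ha => ?_
  have h := hUV _ (hWU (hAa₀ a ha)) _ (hWU (hWb.neg_mem_iff.mpr hw))
  simp only [mem_preimage, vadd_eq_add] at h
  convert h using 1
  abel

theorem isComplete_of_isCompact_toWeakSpace_image {K : Set F}
    (hK : IsCompact (toWeakSpace ℝ F '' K)) : IsComplete K := by
  intro l hl hlK
  have := hl.1
  obtain ⟨_, ⟨x, hxK, rfl⟩, hx⟩ := hK ((map_mono hlK).trans map_principal.le)
  exact ⟨x, hxK, hl.le_nhds_of_clusterPt_toWeakSpace hx⟩

end WeakTopology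

/-- In a Hausdorff locally convex space over `ℝ` in which every bounded set
is totally bounded, every absolutely convex weakly compact set is compact; consequently the
Arens dual topology and the Mackey dual topology coincide on `E'`. -/
theorem isCompact_of_weaklyCompact_and_arens_eq_mackey
    {E : Type*} [AddCommGroup E] [Module ℝ E] [UniformSpace E] [IsUniformAddGroup E]
    [ContinuousSMul ℝ E] [LocallyConvexSpace ℝ E] [T2Space E]
    (hb : ∀ s : Set E, IsVonNBounded ℝ s → TotallyBounded s) :
    (∀ K : Set E, Convex ℝ K → Balanced ℝ K → IsCompact (⇑(toWeakSpace ℝ E) '' K) →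
      IsCompact K) ∧
    ((inferInstanceAs (TopologicalSpace (ArensDual E)) : TopologicalSpace (E →L[ℝ] ℝ)) =
      (inferInstanceAs (TopologicalSpace (MackeyDual E)) : TopologicalSpace (E →L[ℝ] ℝ))) := by
  have hcompact (K : Set E) (hKc : Convex ℝ K) (hK : IsCompact (toWeakSpace ℝ E '' K)) :
      IsCompact K :=
    isCompact_iff_totallyBounded_isComplete.mpr
      ⟨hb K (isVonNBounded_of_isCompact_toWeakSpace_image hKc hK),
        isComplete_of_isCompact_toWeakSpace_image hK⟩
  refine ⟨fun K hKc _ => hcompact K hKc, ?_⟩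
  have hsets : {K : Set E | Convex ℝ K ∧ Balanced ℝ K ∧ IsCompact K} =
      {K : Set E | Convex ℝ K ∧ Balanced ℝ K ∧ IsCompact (toWeakSpace ℝ E '' K)} :=
    Set.ext fun K => and_congr_right fun hKc => and_congr_right fun _ =>
      ⟨fun hK => hK.image (toWeakSpaceCLM ℝ E).continuous, hcompact K hKc⟩
  change (inferInstance : TopologicalSpace (ArensDual E)) =
    (inferInstance : TopologicalSpace (MackeyDual E))
  unfold ArensDual MackeyDual
  rw [hsets]
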